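/- Let u be a positive solution of the radial problem (30) and let w be a solution of the linearized problem (31). Define \xi(r) = r^{n-1}\,[\,(p-1)\varphi_p(u'(r))\,w(r) - \varphi_p'(u'(r))\,u(r)\,w'(r)\,] and T(r) = r^n\,[\,(p-1)\varphi_p(u'(r))\,w'(r) + f(r,u(r))\,w(r)\,] + (n-p)\,r^{n-1}\varphi_p(u'(r))\,w(r). Then for all r \in (0,1): \xi'(r) = r^{n-1}\,w(r)\,[\,u(r) f_u(r,u(r)) - (p-1) f(r,u(r))\,] and T'(r) = r^{n-1}\,w(r)\,[\,p\, f(r,u(r)) + r\, f_r(r,u(r))\,]. -/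

import Mathlib

open Set

/-- `φ_p(t) = t |t|^{p-2}` (real exponent), with `φ_p(0)=0`. -/
noncomputable def phi (p t : ℝ) : ℝ := t * |t| ^ (p - 2)

/-- `φ_p'(t) = (p-1) |t|^{p-2}`. -/
noncomputable def phi' (p t : ℝ) : ℝ := (p - 1) * |t| ^ (p - 2)

/-- The derivative of a function on `[0,1]` (one-sided at the endpoints). -/
noncomputable def du (u : ℝ → ℝ) : ℝ → ℝ := derivWithin u (Set.Icc 0 1)

/-- A positive (classical) solution of the radial problem (30):
`(φ_p(u'))' + ((n-1)/r) φ_p(u') + f(r,u) = 0` on `(0,1)`, `u'(0) = u(1) = 0`,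
with `u ∈ C^1[0,1]`, `φ_p ∘ u' ∈ C^1((0,1])`, and `u > 0` on `[0,1)`. -/
structure RadialSol (p : ℝ) (n : ℕ) (f : ℝ → ℝ → ℝ) (u : ℝ → ℝ) : Prop where
  reg : ContDiffOn ℝ 1 u (Set.Icc 0 1)
  reg' : ContDiffOn ℝ 1 (fun r => phi p (du u r)) (Set.Ioc 0 1)
  pos : ∀ r ∈ Set.Ico (0:ℝ) 1, 0 < u r
  bc0 : du u 0 = 0
  bc1 : u 1 = 0
  ode : ∀ r ∈ Set.Ioo (0:ℝ) 1,
    deriv (fun s => phi p (du u s)) r + ((n : ℝ) - 1) / r * phi p (du u r) + f r (u r) = 0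

/-- A solution of the linearized problem (31) at `u`:
`(φ_p'(u') w')' + ((n-1)/r) φ_p'(u') w' + f_u(r,u) w = 0` on `(0,1)`, `w'(0) = w(1) = 0`. -/
structure LinSol (p : ℝ) (n : ℕ) (f : ℝ → ℝ → ℝ) (u w : ℝ → ℝ) : Prop where
  reg : ContDiffOn ℝ 1 w (Set.Icc 0 1)
  reg' : ContDiffOn ℝ 1 (fun r => phi' p (du u r) * du w r) (Set.Ioc 0 1)
  ode : ∀ r ∈ Set.Ioo (0:ℝ) 1,
    deriv (fun s => phi' p (du u s) * du w s) r
      + ((n : ℝ) - 1) / r * (phi' p (du u r) * du w r) + deriv (f r) (u r) * w r = 0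
  bc0 : du w 0 = 0
  bc1 : w 1 = 0

/-!
Both identities are computed with the product rule, eliminating `(φ_p(u'))'` and `(φ_p'(u') w')'`
by the two equations. The delicate term is `(p-1) φ_p(u') w' = u' · φ_p'(u') w'` in `T`, as `w'`
need not be differentiable. Where `u' ≠ 0`, `u' = φ_q(φ_p(u'))` with `q = p/(p-1)` is
differentiable. Where `u' = 0`, a differentiable function vanishing at `r` times a continuous one
is differentiable; for `p ≠ 2` reading the product both as `(p-1) φ_p(u') · w'` and as
`φ_p'(u') w' · u'` (both first factors vanish at `r`) forces `(φ_p(u'))' w' = 0` there.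
-/

open Filter Topology

lemma mul_phi' (p t : ℝ) : t * phi' p t = (p - 1) * phi p t := by
  simp only [phi, phi']; ring

lemma abs_phi {p : ℝ} (hp : 1 < p) (t : ℝ) : |phi p t| = |t| ^ (p - 1) := by
  rw [phi, abs_mul, abs_of_nonneg (Real.rpow_nonneg (abs_nonneg t) _),
    ← Real.rpow_one_add' (abs_nonneg t) (by linarith)]
  ring_nf

lemma phi_conjExponent_phi {p : ℝ} (hp : 1 < p) (t : ℝ) : phi (p / (p - 1)) (phi p t) = t := by
  rcases eq_or_ne t 0 with rfl | ht
  · simp [phi]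
  · have hexp : (p - 1) * (p / (p - 1) - 2) = 2 - p := by
      field_simp [(by linarith : p - 1 ≠ 0)]; ring
    rw [phi, abs_phi hp, ← Real.rpow_mul (abs_nonneg t), hexp, phi, mul_assoc,
      ← Real.rpow_add (abs_pos.2 ht)]
    norm_num

lemma phi'_pos {p : ℝ} (hp : 1 < p) {t : ℝ} (ht : t ≠ 0) : 0 < phi' p t :=
  mul_pos (by linarith) (Real.rpow_pos_of_pos (abs_pos.2 ht) _)

-- For `p < 2` this is the junk value `0 ^ (p - 2) = 0`.
lemma phi'_zero {p : ℝ} (hp : p ≠ 2) : phi' p 0 = 0 := by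
  rw [phi', abs_zero, Real.zero_rpow (sub_ne_zero.2 hp), mul_zero]

lemma hasDerivAt_phi (p : ℝ) {t : ℝ} (ht : t ≠ 0) : HasDerivAt (phi p) (phi' p t) t := by
  have hpos : 0 < |t| := abs_pos.2 ht
  have h : HasDerivAt (fun y => y * |y| ^ (p - 2))
      (1 * |t| ^ (p - 2) + t * (SignType.sign t * (p - 2) * |t| ^ (p - 2 - 1))) t :=
    (hasDerivAt_id' t).mul ((hasDerivAt_abs ht).rpow_const (Or.inl hpos.ne'))
  refine h.congr_deriv ?_
  rw [phi', Real.rpow_sub_one hpos.ne']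
  field_simp
  linear_combination (p - 2) * self_mul_sign t

lemma HasDerivAt.of_phi_comp {p : ℝ} (hp : 1 < p) {U : ℝ → ℝ} {g' r : ℝ} (hUr : U r ≠ 0)
    (hG : HasDerivAt (fun s => phi p (U s)) g' r) : HasDerivAt U (g' / phi' p (U r)) r := by
  set q := p / (p - 1)
  have hq : 1 < q := by rw [one_lt_div (by linarith)]; linarith
  have hqq : q / (q - 1) = p := by
    simp only [q]; field_simp [(by linarith : p - 1 ≠ 0)]; ring
  have hGr : phi p (U r) ≠ 0 := by
    rw [← abs_pos, abs_phi hp]; exact Real.rpow_pos_of_pos (abs_pos.2 hUr) _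
  have hinv : HasDerivAt (phi q) (phi' p (U r))⁻¹ (phi p (U r)) := by
    refine HasDerivAt.of_local_left_inverse (f := phi p) (hasDerivAt_phi q hGr).continuousAt
      ?_ (phi'_pos hp hUr).ne' (Eventually.of_forall fun y => ?_)
    · rw [phi_conjExponent_phi hp]; exact hasDerivAt_phi p hUr
    · simpa only [hqq] using phi_conjExponent_phi hq y
  have h := hinv.comp r hG
  rw [show (phi q ∘ fun s => phi p (U s)) = U from
    funext fun s => phi_conjExponent_phi hp (U s)] at h
  simpa only [div_eq_mul_inv, mul_comm] using h

lemma HasDerivAt.mul_continuousAt_of_eq_zero {f g : ℝ → ℝ} {f' r : ℝ} (hf : HasDerivAt f f' r)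
    (hfr : f r = 0) (hg : ContinuousAt g r) : HasDerivAt (fun s => f s * g s) (f' * g r) r := by
  rw [hasDerivAt_iff_tendsto_slope] at hf ⊢
  have h := hf.mul (hg.tendsto.mono_left nhdsWithin_le_nhds)
  refine h.congr fun s => ?_
  simp only [slope_def_field, hfr, zero_mul, sub_zero]
  ring

lemma hasDerivAt_mul_phi'_mul {p : ℝ} (hp : 1 < p) {U W : ℝ → ℝ} {g' h' r : ℝ}
    (hG : HasDerivAt (fun s => phi p (U s)) g' r)
    (hH : HasDerivAt (fun s => phi' p (U s) * W s) h' r)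
    (hU : ContinuousAt U r) (hW : ContinuousAt W r) :
    HasDerivAt (fun s => U s * (phi' p (U s) * W s)) (g' * W r + U r * h') r := by
  rcases eq_or_ne (U r) 0 with hUr | hUr
  · have hGW : HasDerivAt (fun s => U s * (phi' p (U s) * W s)) ((p - 1) * (g' * W r)) r := by
      have h := (hG.mul_continuousAt_of_eq_zero (by rw [hUr, phi, zero_mul]) hW).const_mul
        (p - 1)
      simpa only [← mul_assoc, mul_phi'] using h
    suffices (p - 1) * (g' * W r) = g' * W r by rwa [hUr, zero_mul, add_zero, ← this]
    rcases eq_or_ne p 2 with rfl | hp2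
    · ring
    have h0 : HasDerivAt (fun s => U s * (phi' p (U s) * W s)) 0 r := by
      have h := hH.mul_continuousAt_of_eq_zero (by rw [hUr, phi'_zero hp2, zero_mul]) hU
      simpa only [mul_comm, hUr, mul_zero] using h
    rw [(mul_eq_zero.1 (hGW.unique h0)).resolve_left (sub_pos.2 hp).ne', mul_zero]
  · have hphi' := (phi'_pos hp hUr).ne'
    refine ((hG.of_phi_comp hp hUr).mul hH).congr_deriv ?_
    field_simp

lemma hasDerivAt_pow_of_ne_zero (m : ℕ) {r : ℝ} (hr : r ≠ 0) :
    HasDerivAt (fun s : ℝ => s ^ m) (m * r ^ m / r) r := by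
  refine (hasDerivAt_pow m r).congr_deriv ?_
  rcases m with _ | m
  · simp
  · rw [pow_succ]; field_simp; simp

lemma hasDerivAt_comp_prodMk {f : ℝ → ℝ → ℝ} {u : ℝ → ℝ} {u' r : ℝ}
    (hf : DifferentiableAt ℝ (fun z : ℝ × ℝ => f z.1 z.2) (r, u r)) (hu : HasDerivAt u u' r) :
    HasDerivAt (fun s => f s (u s)) (deriv (fun s => f s (u r)) r + deriv (f r) (u r) * u') r := by
  set L := fderiv ℝ (fun z : ℝ × ℝ => f z.1 z.2) (r, u r)
  have hr : HasDerivAt (fun s => f s (u r)) (L (1, 0)) r := by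
    exact hf.hasFDerivAt.comp_hasDerivAt r ((hasDerivAt_id r).prodMk (hasDerivAt_const r (u r)))
  have hy : HasDerivAt (f r) (L (0, 1)) (u r) := by
    exact hf.hasFDerivAt.comp_hasDerivAt (u r)
      ((hasDerivAt_const (u r) r).prodMk (hasDerivAt_id (u r)))
  have h : HasDerivAt (fun s => f s (u s)) (L (1, u')) r := by
    exact hf.hasFDerivAt.comp_hasDerivAt r ((hasDerivAt_id r).prodMk hu)
  rw [hr.deriv, hy.deriv]
  refine h.congr_deriv ?_
  rw [show ((1 : ℝ), u') = (1, 0) + u' • ((0 : ℝ), (1 : ℝ)) by simp, map_add, map_smul,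
    smul_eq_mul, mul_comm (L (0, 1))]

lemma hasDerivAt_du {u : ℝ → ℝ} (hu : ContDiffOn ℝ 1 u (Icc 0 1)) {r : ℝ}
    (hr : r ∈ Ioo 0 1) : HasDerivAt u (du u r) r := by
  have hI : Icc (0 : ℝ) 1 ∈ 𝓝 r := Icc_mem_nhds hr.1 hr.2
  rw [du, derivWithin_of_mem_nhds hI]
  exact (hu.differentiableOn one_ne_zero).hasDerivAt hI

lemma continuousAt_du {u : ℝ → ℝ} (hu : ContDiffOn ℝ 1 u (Icc 0 1)) {r : ℝ}
    (hr : r ∈ Ioo 0 1) : ContinuousAt (du u) r :=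
  (hu.continuousOn_derivWithin (uniqueDiffOn_Icc zero_lt_one) le_rfl).continuousAt
    (Icc_mem_nhds hr.1 hr.2)

lemma ContDiffOn.hasDerivAt_of_mem_Ioo {F : ℝ → ℝ} (hF : ContDiffOn ℝ 1 F (Ioc 0 1)) {r : ℝ}
    (hr : r ∈ Ioo 0 1) : HasDerivAt F (deriv F r) r :=
  (hF.differentiableOn one_ne_zero).hasDerivAt (Ioc_mem_nhds hr.1 hr.2)

noncomputable def radialXi (p : ℝ) (n : ℕ) (u w : ℝ → ℝ) (s : ℝ) : ℝ :=
  s ^ (n - 1) * ((p - 1) * phi p (du u s) * w s - phi' p (du u s) * u s * du w s)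

noncomputable def radialT (p : ℝ) (n : ℕ) (f : ℝ → ℝ → ℝ) (u w : ℝ → ℝ) (s : ℝ) : ℝ :=
  s ^ n * ((p - 1) * phi p (du u s) * du w s + f s (u s) * w s)
    + ((n : ℝ) - p) * s ^ (n - 1) * phi p (du u s) * w s

section Identities

variable {p : ℝ} {n : ℕ} {f : ℝ → ℝ → ℝ} {u w : ℝ → ℝ} {r : ℝ}

lemma hasDerivAt_radialXi (hn : 1 ≤ n) (hu : RadialSol p n f u) (hw : LinSol p n f u w)
    (hr : r ∈ Ioo 0 1) :
    HasDerivAt (radialXi p n u w)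
      (r ^ (n - 1) * w r * (u r * deriv (f r) (u r) - (p - 1) * f r (u r))) r := by
  obtain ⟨m, rfl⟩ := Nat.exists_eq_add_of_le' hn
  have hG := hu.reg'.hasDerivAt_of_mem_Ioo hr
  have hH := hw.reg'.hasDerivAt_of_mem_Ioo hr
  have h := (hasDerivAt_pow_of_ne_zero m hr.1.ne').mul
    (((hG.const_mul (p - 1)).mul (hasDerivAt_du hw.reg hr)).sub
      (hH.mul (hasDerivAt_du hu.reg hr)))
  have hode_u := hu.ode r hr
  have hode_w := hw.ode r hr
  push_cast at hode_u hode_w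
  rw [show radialXi p (m + 1) u w = fun s => s ^ m * ((p - 1) * phi p (du u s) * w s
      - phi' p (du u s) * du w s * u s) by
    funext s; simp only [radialXi, Nat.add_sub_cancel]; ring]
  refine h.congr_deriv ?_
  simp only [Pi.mul_apply, Pi.sub_apply, Nat.add_sub_cancel]
  linear_combination (norm := (field_simp; ring))
    (r ^ m * (p - 1) * w r) * hode_u - (r ^ m * u r) * hode_w
      - (r ^ m * du w r) * mul_phi' p (du u r)

lemma hasDerivAt_radialT (hp : 1 < p) (hn : 1 ≤ n)
    (hf : ContDiffOn ℝ 1 (fun z : ℝ × ℝ => f z.1 z.2) (Icc 0 1 ×ˢ Ici 0))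
    (hu : RadialSol p n f u) (hw : LinSol p n f u w) (hr : r ∈ Ioo 0 1) :
    HasDerivAt (radialT p n f u w)
      (r ^ (n - 1) * w r * (p * f r (u r) + r * deriv (fun s => f s (u r)) r)) r := by
  obtain ⟨m, rfl⟩ := Nat.exists_eq_add_of_le' hn
  have hr0 : r ≠ 0 := hr.1.ne'
  have hG := hu.reg'.hasDerivAt_of_mem_Ioo hr
  have hH := hw.reg'.hasDerivAt_of_mem_Ioo hr
  have hfr : DifferentiableAt ℝ (fun z : ℝ × ℝ => f z.1 z.2) (r, u r) :=
    (hf.differentiableOn one_ne_zero).differentiableAt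
      (prod_mem_nhds (Icc_mem_nhds hr.1 hr.2) (Ici_mem_nhds (hu.pos r ⟨hr.1.le, hr.2⟩)))
  have hflux := hasDerivAt_mul_phi'_mul hp hG hH (continuousAt_du hu.reg hr)
    (continuousAt_du hw.reg hr)
  have hsource := (hasDerivAt_comp_prodMk hfr (hasDerivAt_du hu.reg hr)).mul
    (hasDerivAt_du hw.reg hr)
  have h := ((hasDerivAt_pow_of_ne_zero (m + 1) hr0).mul (hflux.add hsource)).add
    ((((hasDerivAt_pow_of_ne_zero m hr0).const_mul ((m : ℝ) + 1 - p)).mul hG).mul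
      (hasDerivAt_du hw.reg hr))
  have hode_u := hu.ode r hr
  have hode_w := hw.ode r hr
  push_cast at hode_u hode_w h
  rw [show radialT p (m + 1) f u w = fun s => s ^ (m + 1) * (du u s * (phi' p (du u s) * du w s)
      + f s (u s) * w s) + ((m : ℝ) + 1 - p) * s ^ m * phi p (du u s) * w s by
    funext s; simp only [radialT, Nat.add_sub_cancel, ← mul_phi']; push_cast; ring]
  refine h.congr_deriv ?_
  simp only [Pi.mul_apply, Pi.add_apply, Nat.add_sub_cancel]
  linear_combination (norm := (field_simp; ring))
    (r ^ (m + 1) * du w r + ((m : ℝ) + 1 - p) * r ^ m * w r) * hode_u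
      + (r ^ (m + 1) * du u r) * hode_w + (r ^ m * du w r) * mul_phi' p (du u r)

end Identities

/-- Lemma 2.4: M. Tang type identities for `ξ(r)` and `T(r)`. -/
theorem stmt2 (p : ℝ) (hp : 1 < p) (n : ℕ) (hn : 1 ≤ n)
    (f : ℝ → ℝ → ℝ)
    (hf : ContDiffOn ℝ 1 (fun z : ℝ × ℝ => f z.1 z.2) (Set.Icc 0 1 ×ˢ Set.Ici 0))
    (u : ℝ → ℝ) (hu : RadialSol p n f u)
    (w : ℝ → ℝ) (hw : LinSol p n f u w) :
    ∀ r ∈ Set.Ioo (0:ℝ) 1,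
      deriv (fun s => s ^ (n - 1) *
          ((p - 1) * phi p (du u s) * w s - phi' p (du u s) * u s * du w s)) r
        = r ^ (n - 1) * w r * (u r * deriv (f r) (u r) - (p - 1) * f r (u r)) ∧
      deriv (fun s => s ^ n *
          ((p - 1) * phi p (du u s) * du w s + f s (u s) * w s)
          + ((n : ℝ) - p) * s ^ (n - 1) * phi p (du u s) * w s) r
        = r ^ (n - 1) * w r * (p * f r (u r) + r * deriv (fun s => f s (u r)) r) := by
  intro r hr
  exact ⟨(hasDerivAt_radialXi hn hu hw hr).deriv, (hasDerivAt_radialT hp hn hf hu hw hr).deriv⟩
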